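/- arXiv:1405.0251 — 3 statements merged into one kernel-verified Lean document; each statement's English description precedes it below -/
import Mathlib

section
/- For fixed y > 0, the functions z ↦ |z| V(y/|z|) and x ↦ y U^{-1}(|x|) are convex conjugates of each other, where U^{-1} is the inverse of U extended by +∞ on [lim_{x→∞}U(x), ∞) if U is bounded. -/
open Set Filter Topology

/-!
For `w > 0` we have `w V(y/w) = sup_{q>0} (w U(q) - q y)`, and the same supremum is `0` at
`w = 0`; both functions are even, so everything reduces to nonnegative arguments. Fenchel–Young,
`x z ≤ f z + y U⁻¹(|x|)`, follows from this formula when `|x| = U(q₀)` lies in the range of `U`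
and is trivial above it. Equality in the first conjugation comes from the tangent line of `U`
at `q₀`: for `z₀ = y / U'(q₀)` the supremum defining `f z₀` is attained at `q₀`, and when `|x|`
exceeds the range of `U` these tangent points make the supremum unbounded. In the second
conjugation, `x = U(q)` recovers each term `z U(q) - q y` of the supremum defining `f z`.
-/

lemma ConcaveOn.le_add_deriv_mul_sub {S : Set ℝ} {f : ℝ → ℝ} {x y : ℝ} (hfc : ConcaveOn ℝ S f)
    (hx : x ∈ S) (hy : y ∈ S) (hfd : DifferentiableAt ℝ f x) :
    f y ≤ f x + deriv f x * (y - x) := by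
  rcases lt_trichotomy y x with hyx | rfl | hxy
  · have h := hfc.deriv_le_slope hy hx hyx hfd
    rw [slope_def_field, le_div_iff₀ (sub_pos.2 hyx)] at h
    linarith
  · simp
  · have h := hfc.slope_le_deriv hx hy hxy hfd
    rw [slope_def_field, div_le_iff₀ (sub_pos.2 hxy)] at h
    linarith

lemma ConcaveOn.deriv_pos_of_strictMonoOn {S : Set ℝ} {f : ℝ → ℝ} {x y : ℝ}
    (hfc : ConcaveOn ℝ S f) (hf : StrictMonoOn f S) (hx : x ∈ S) (hy : y ∈ S) (hxy : x < y)
    (hfd : DifferentiableAt ℝ f x) : 0 < deriv f x :=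
  (hf.slope_pos hx hy hxy.ne).trans_le (hfc.slope_le_deriv hx hy hxy hfd)

lemma StrictMonoOn.lt_of_tendsto_nhdsGT {α β : Type*} [LinearOrder α] [TopologicalSpace α]
    [OrderTopology α] [DenselyOrdered α] [LinearOrder β] [TopologicalSpace β]
    [OrderClosedTopology β] {f : α → β} {a x : α} {b : β} (hf : StrictMonoOn f (Ioi a))
    (hlim : Tendsto f (𝓝[>] a) (𝓝 b)) (hx : a < x) : b < f x := by
  have := nhdsGT_neBot_of_exists_gt ⟨x, hx⟩
  obtain ⟨m, ham, hmx⟩ := exists_between hx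
  refine (le_of_tendsto hlim ?_).trans_lt (hf ham hx hmx)
  filter_upwards [Ioo_mem_nhdsGT ham] with r hr
  exact (hf hr.1 ham hr.2).le

lemma ContinuousOn.exists_eq_or_forall_lt_of_tendsto_nhdsGT {f : ℝ → ℝ} {a b t : ℝ}
    (hf : ContinuousOn f (Ioi a)) (hlim : Tendsto f (𝓝[>] a) (𝓝 b)) (ht : b < t) :
    (∃ x ∈ Ioi a, f x = t) ∨ ∀ x ∈ Ioi a, f x < t := by
  refine or_iff_not_imp_right.2 fun h => ?_
  push Not at h
  obtain ⟨x₀, hx₀, htx₀⟩ := h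
  have hnear : ∀ᶠ p in 𝓝[>] a, p ∈ Ioo a x₀ := Ioo_mem_nhdsGT hx₀
  obtain ⟨p, ⟨hpa, hpx₀⟩, hpt⟩ := (hnear.and (hlim.eventually_lt_const ht)).exists
  have hsub : Icc p x₀ ⊆ Ioi a := fun r hr => hpa.trans_le hr.1
  obtain ⟨x, hx, hxt⟩ := intermediate_value_Icc hpx₀.le (hf.mono hsub) ⟨hpt.le, htx₀⟩
  exact ⟨x, hsub hx, hxt⟩

lemma EReal.coe_le_of_isLUB {S : Set ℝ} {a : ℝ} {b : EReal} (ha : IsLUB S a) (hS : S.Nonempty)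
    (hb : ∀ s ∈ S, (s : EReal) ≤ b) : (a : EReal) ≤ b := by
  induction b using EReal.rec with
  | bot =>
    obtain ⟨s, hs⟩ := hS
    exact absurd (hb s hs) (by simp)
  | coe c => exact EReal.coe_le_coe_iff.2 (ha.2 fun s hs => EReal.coe_le_coe_iff.1 (hb s hs))
  | top => exact le_top

lemma iSup_coe_mul_sub_eq_iSup_abs {h : ℝ → EReal} (h_even : ∀ z, h (-z) = h z) (x : ℝ) :
    ⨆ z, ((x * z : ℝ) : EReal) - h z = ⨆ z, ((|x| * z : ℝ) : EReal) - h z := by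
  rcases abs_choice x with hx | hx
  · rw [hx]
  · conv_rhs => rw [← (Equiv.neg ℝ).iSup_comp]
    rw [hx]
    simp only [Equiv.neg_apply, neg_mul_neg, h_even]

section Perspective

variable {U : ℝ → ℝ} {y : ℝ}

lemma bddAbove_image_sub_mul (hU_conc : ConcaveOn ℝ (Ioi 0) U)
    (hU_diff : DifferentiableOn ℝ U (Ioi 0)) (hInadaInfty : Tendsto (deriv U) atTop (𝓝 0))
    {t : ℝ} (ht : 0 < t) : BddAbove ((fun q => U q - q * t) '' Ioi 0) := by
  -- a tangent line of slope `deriv U q₁ < t` bounds `U q - q * t` from above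
  obtain ⟨q₁, hq₁t, hq₁⟩ :=
    ((hInadaInfty.eventually_lt_const ht).and (eventually_gt_atTop 0)).exists
  refine ⟨U q₁ - deriv U q₁ * q₁, ?_⟩
  rintro _ ⟨q, hq, rfl⟩
  have := hU_conc.le_add_deriv_mul_sub hq₁ hq (hU_diff.differentiableAt (Ioi_mem_nhds hq₁))
  nlinarith [mem_Ioi.1 hq]

lemma isLUB_conjugate {V : ℝ → ℝ} (hU_conc : ConcaveOn ℝ (Ioi 0) U)
    (hU_diff : DifferentiableOn ℝ U (Ioi 0)) (hInadaInfty : Tendsto (deriv U) atTop (𝓝 0))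
    (hV : ∀ t ∈ Ioi (0:ℝ), V t = sSup {v : ℝ | ∃ x ∈ Ioi (0:ℝ), v = U x - x * t})
    {t : ℝ} (ht : 0 < t) : IsLUB ((fun q => U q - q * t) '' Ioi 0) (V t) := by
  have hset : {v : ℝ | ∃ x ∈ Ioi (0:ℝ), v = U x - x * t} = (fun q => U q - q * t) '' Ioi 0 := by
    ext; simp [eq_comm]
  rw [hV t ht, hset]
  exact isLUB_csSup (nonempty_Ioi.image _) (bddAbove_image_sub_mul hU_conc hU_diff hInadaInfty ht)

lemma isLUB_perspective {V : ℝ → ℝ}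
    (hV : ∀ t, 0 < t → IsLUB ((fun q => U q - q * t) '' Ioi 0) (V t)) (hy : 0 < y)
    {w : ℝ} (hw : 0 ≤ w) :
    IsLUB ((fun q => w * U q - q * y) '' Ioi 0) (if w = 0 then 0 else |w| * V (y / |w|)) := by
  rcases hw.eq_or_lt with rfl | hw
  · have himage : (fun q => 0 * U q - q * y) '' Ioi 0 = Iio 0 := by
      ext v
      refine ⟨?_, fun hv => ⟨-v / y, div_pos (neg_pos.2 hv) hy, by field_simp; ring⟩⟩
      rintro ⟨q, hq, rfl⟩
      simpa using mul_pos (mem_Ioi.1 hq) hy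
    rw [if_pos rfl, himage]
    exact isLUB_Iio
  · rw [if_neg hw.ne', abs_of_pos hw]
    have himage : (fun q => w * U q - q * y) '' Ioi 0 =
        (w * ·) '' ((fun q => U q - q * (y / w)) '' Ioi 0) := by
      rw [image_image]
      refine image_congr fun q _ => ?_
      field_simp
    rw [himage]
    exact (hV (y / w) (div_pos hy hw)).mul_left hw.le

end Perspective

section Duality

variable {U f : ℝ → ℝ} {Uinv : ℝ → EReal} {y : ℝ}

lemma perspective_nonneg (hU0 : Tendsto U (𝓝[>] 0) (𝓝 0))
    (hf : ∀ w, 0 ≤ w → IsLUB ((fun q => w * U q - q * y) '' Ioi 0) (f w)) {w : ℝ} (hw : 0 ≤ w) :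
    0 ≤ f w := by
  have hlim : Tendsto (fun q => w * U q - q * y) (𝓝[>] 0) (𝓝 0) := by
    simpa using (hU0.const_mul w).sub ((tendsto_id.mono_left nhdsWithin_le_nhds).mul_const y)
  exact le_of_tendsto hlim (eventually_nhdsWithin_of_forall fun q hq => (hf w hw).1 ⟨q, hq, rfl⟩)

-- With `z₀ = y / deriv U q₀`, the tangent line of `U` at `q₀` shows that `q₀` maximizes
-- `z₀ * U q - q * y`.
lemma exists_pos_perspective_eq (hy : 0 < y) (hU_mono : StrictMonoOn U (Ioi 0))
    (hU_conc : ConcaveOn ℝ (Ioi 0) U) (hU_diff : DifferentiableOn ℝ U (Ioi 0))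
    (hf : ∀ w, 0 ≤ w → IsLUB ((fun q => w * U q - q * y) '' Ioi 0) (f w)) {q₀ : ℝ}
    (hq₀ : 0 < q₀) : ∃ z₀ > 0, f z₀ = z₀ * U q₀ - q₀ * y := by
  have hdiff := hU_diff.differentiableAt (Ioi_mem_nhds hq₀)
  have hd : 0 < deriv U q₀ := hU_conc.deriv_pos_of_strictMonoOn hU_mono hq₀
    (show 0 < q₀ + 1 by linarith) (lt_add_one q₀) hdiff
  set z₀ := y / deriv U q₀
  have hz₀ : 0 < z₀ := div_pos hy hd
  have hz₀d : z₀ * deriv U q₀ = y := div_mul_cancel₀ y hd.ne'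
  have hmax : IsGreatest ((fun q => z₀ * U q - q * y) '' Ioi 0) (z₀ * U q₀ - q₀ * y) := by
    refine ⟨⟨q₀, hq₀, rfl⟩, ?_⟩
    rintro _ ⟨q, hq, rfl⟩
    have := mul_le_mul_of_nonneg_left (hU_conc.le_add_deriv_mul_sub hq₀ hq hdiff) hz₀.le
    rw [mul_add, ← mul_assoc, hz₀d] at this
    show z₀ * U q - q * y ≤ _
    linarith
  exact ⟨z₀, hz₀, (hf z₀ hz₀.le).unique hmax.isLUB⟩

-- Stated additively, so that it gives both `x z - f z ≤ y U⁻¹|x|` and `x z - y U⁻¹|x| ≤ f z`.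
lemma coe_mul_le_perspective_add (hy : 0 < y) (hU_cont : ContinuousOn U (Ioi 0))
    (hU0 : Tendsto U (𝓝[>] 0) (𝓝 0)) (hinv : ∀ x ∈ Ioi (0:ℝ), Uinv (U x) = (x : EReal))
    (hinv0 : Uinv 0 = 0) (htop : ∀ t : ℝ, (∀ x ∈ Ioi (0:ℝ), U x < t) → Uinv t = ⊤)
    (hf : ∀ w, 0 ≤ w → IsLUB ((fun q => w * U q - q * y) '' Ioi 0) (f w))
    (hf_abs : ∀ z, f |z| = f z) (x z : ℝ) :
    ((x * z : ℝ) : EReal) ≤ f z + y * Uinv |x| := by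
  have hxz : x * z ≤ |x| * |z| := abs_mul x z ▸ le_abs_self _
  rcases (abs_nonneg x).eq_or_lt with hx | hx
  · rw [← hx, hinv0, mul_zero, add_zero, EReal.coe_le_coe_iff]
    rw [← hx, zero_mul] at hxz
    linarith [hf_abs z ▸ perspective_nonneg hU0 hf (abs_nonneg z)]
  rcases hU_cont.exists_eq_or_forall_lt_of_tendsto_nhdsGT hU0 hx with ⟨q₀, hq₀, hUq₀⟩ | hall
  · rw [← hUq₀, hinv q₀ hq₀, ← EReal.coe_mul, ← EReal.coe_add, EReal.coe_le_coe_iff]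
    rw [← hUq₀] at hxz
    have := hf_abs z ▸ (hf |z| (abs_nonneg z)).1 ⟨q₀, hq₀, rfl⟩
    linarith
  · rw [htop _ hall, EReal.coe_mul_top_of_pos hy, EReal.coe_add_top]
    exact le_top

lemma mul_inv_le_iSup_mul_sub (hy : 0 < y) (hU_mono : StrictMonoOn U (Ioi 0))
    (hU_conc : ConcaveOn ℝ (Ioi 0) U) (hU_diff : DifferentiableOn ℝ U (Ioi 0))
    (hU0 : Tendsto U (𝓝[>] 0) (𝓝 0)) (hinv : ∀ x ∈ Ioi (0:ℝ), Uinv (U x) = (x : EReal))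
    (hinv0 : Uinv 0 = 0) (htop : ∀ t : ℝ, (∀ x ∈ Ioi (0:ℝ), U x < t) → Uinv t = ⊤)
    (hf : ∀ w, 0 ≤ w → IsLUB ((fun q => w * U q - q * y) '' Ioi 0) (f w)) {a : ℝ} (ha : 0 ≤ a) :
    (y : EReal) * Uinv a ≤ ⨆ z, ((a * z : ℝ) : EReal) - f z := by
  have hq_le_iSup : ∀ q₀, 0 < q₀ → U q₀ ≤ a →
      ((y * q₀ : ℝ) : EReal) ≤ ⨆ z, ((a * z : ℝ) : EReal) - f z := by
    intro q₀ hq₀ hUa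
    obtain ⟨z₀, hz₀, hfz₀⟩ := exists_pos_perspective_eq hy hU_mono hU_conc hU_diff hf hq₀
    refine le_iSup_of_le z₀ ?_
    rw [hfz₀, ← EReal.coe_sub, EReal.coe_le_coe_iff]
    nlinarith [mul_le_mul_of_nonneg_left hUa hz₀.le]
  rcases ha.eq_or_lt with rfl | ha
  · rw [hinv0, mul_zero]
    refine le_iSup_of_le 0 ?_
    have hf0 : f 0 ≤ 0 := (hf 0 le_rfl).2 <| by
      rintro _ ⟨q, hq, rfl⟩
      simpa using (mul_pos (mem_Ioi.1 hq) hy).le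
    simpa using hf0
  rcases hU_diff.continuousOn.exists_eq_or_forall_lt_of_tendsto_nhdsGT hU0 ha with
    ⟨q₀, hq₀, rfl⟩ | hall
  · rw [hinv q₀ hq₀, ← EReal.coe_mul]
    exact hq_le_iSup q₀ hq₀ le_rfl
  · rw [htop a hall, EReal.coe_mul_top_of_pos hy, top_le_iff, EReal.eq_top_iff_forall_lt]
    intro M
    have hq : 0 < (|M| + 1) / y := by positivity
    refine lt_of_lt_of_le ?_ (hq_le_iSup _ hq (hall _ hq).le)
    rw [EReal.coe_lt_coe_iff, mul_div_cancel₀ _ hy.ne']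
    linarith [le_abs_self M]

lemma perspective_le_iSup_mul_sub (hU_mono : StrictMonoOn U (Ioi 0))
    (hU0 : Tendsto U (𝓝[>] 0) (𝓝 0)) (hinv : ∀ x ∈ Ioi (0:ℝ), Uinv (U x) = (x : EReal))
    (hf : ∀ w, 0 ≤ w → IsLUB ((fun q => w * U q - q * y) '' Ioi 0) (f w)) {w : ℝ} (hw : 0 ≤ w) :
    (f w : EReal) ≤ ⨆ x, ((w * x : ℝ) : EReal) - y * Uinv |x| := by
  refine EReal.coe_le_of_isLUB (hf w hw) (nonempty_Ioi.image _) ?_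
  rintro _ ⟨q, hq, rfl⟩
  refine le_iSup_of_le (U q) ?_
  rw [abs_of_pos (hU_mono.lt_of_tendsto_nhdsGT hU0 hq), hinv q hq, ← EReal.coe_mul,
    ← EReal.coe_sub, mul_comm y q]

end Duality

theorem perspective_conjugate_inverse_general (U V : ℝ → ℝ) (Uinv : ℝ → EReal) (y : ℝ) (hy : 0 < y)
    (hU_mono : StrictMonoOn U (Ioi 0))
    (hU_conc : StrictConcaveOn ℝ (Ioi 0) U)
    (hU_diff : ContDiffOn ℝ 1 U (Ioi 0))
    (hInadaInfty : Tendsto (deriv U) atTop (nhds 0))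
    (hU0 : Tendsto U (nhdsWithin 0 (Ioi 0)) (nhds 0))
    (hV : ∀ t ∈ Ioi (0:ℝ), V t = sSup {v : ℝ | ∃ x ∈ Ioi (0:ℝ), v = U x - x * t})
    (hinv : ∀ x ∈ Ioi (0:ℝ), Uinv (U x) = (x : EReal))
    (hinv0 : Uinv 0 = 0)
    (htop : ∀ t : ℝ, (∀ x ∈ Ioi (0:ℝ), U x < t) → Uinv t = ⊤)
    (f : ℝ → ℝ)
    (hf : ∀ z : ℝ, f z = if z = 0 then 0 else |z| * V (y / |z|)) :
    (∀ x : ℝ, (y : EReal) * Uinv |x| = ⨆ z : ℝ, ((x * z : ℝ) : EReal) - (f z : EReal)) ∧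
    (∀ z : ℝ, (f z : EReal) = ⨆ x : ℝ, ((x * z : ℝ) : EReal) - (y : EReal) * Uinv |x|) := by
  have hU_diff' := hU_diff.differentiableOn one_ne_zero
  have hf_lub : ∀ w, 0 ≤ w → IsLUB ((fun q => w * U q - q * y) '' Ioi 0) (f w) := fun w hw =>
    hf w ▸ isLUB_perspective
      (fun _ ht => isLUB_conjugate hU_conc.concaveOn hU_diff' hInadaInfty hV ht) hy hw
  have hf_abs : ∀ z, f |z| = f z := fun z => by simp only [hf, abs_abs, abs_eq_zero]
  have hFY := coe_mul_le_perspective_add hy hU_diff'.continuousOn hU0 hinv hinv0 htop hf_lub hf_abs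
  constructor
  · intro x
    refine le_antisymm ?_ (iSup_le fun z => ?_)
    · rw [iSup_coe_mul_sub_eq_iSup_abs (h := fun z => (f z : EReal))
        (fun z => by rw [← hf_abs, abs_neg, hf_abs])]
      exact mul_inv_le_iSup_mul_sub hy hU_mono hU_conc.concaveOn hU_diff' hU0 hinv
        hinv0 htop hf_lub (abs_nonneg x)
    · rw [EReal.sub_le_iff_le_add (.inl (EReal.coe_ne_bot _)) (.inl (EReal.coe_ne_top _)),
        add_comm]
      exact hFY x z
  · intro z
    refine le_antisymm ?_ (iSup_le fun x => ?_)
    · simp_rw [mul_comm _ z]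
      rw [iSup_coe_mul_sub_eq_iSup_abs (h := fun x => (y : EReal) * Uinv |x|) (by simp),
        ← hf_abs]
      exact perspective_le_iSup_mul_sub hU_mono hU0 hinv hf_lub (abs_nonneg z)
    · rw [EReal.sub_le_iff_le_add (.inr (EReal.coe_ne_top _)) (.inr (EReal.coe_ne_bot _))]
      exact hFY x z

/-- For fixed `y > 0`, the functions `z ↦ |z| V(y/|z|)` (with value `0` at `z = 0`) and
`x ↦ y·U⁻¹(|x|)` are convex conjugates of each other, where `U⁻¹` inverts `U` on its range,
`U⁻¹ 0 = 0`, and `U⁻¹` equals `+∞` above `lim_{x→∞} U(x)` when `U` is bounded. -/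
theorem perspective_conjugate_inverse (U V : ℝ → ℝ) (Uinv : ℝ → EReal) (y : ℝ) (hy : 0 < y)
    (hU_mono : StrictMonoOn U (Ioi 0))
    (hU_conc : StrictConcaveOn ℝ (Ioi 0) U)
    (hU_diff : ContDiffOn ℝ 1 U (Ioi 0))
    (hInada0 : Tendsto (deriv U) (nhdsWithin 0 (Ioi 0)) atTop)
    (hInadaInfty : Tendsto (deriv U) atTop (nhds 0))
    (hU0 : Tendsto U (nhdsWithin 0 (Ioi 0)) (nhds 0))
    (hV : ∀ t ∈ Ioi (0:ℝ), V t = sSup {v : ℝ | ∃ x ∈ Ioi (0:ℝ), v = U x - x * t})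
    (hinv : ∀ x ∈ Ioi (0:ℝ), Uinv (U x) = (x : EReal))
    (hinv0 : Uinv 0 = 0)
    (htop : ∀ t : ℝ, (∀ x ∈ Ioi (0:ℝ), U x < t) → Uinv t = ⊤)
    (f : ℝ → ℝ)
    (hf : ∀ z : ℝ, f z = if z = 0 then 0 else |z| * V (y / |z|)) :
    (∀ x : ℝ, (y : EReal) * Uinv |x| = ⨆ z : ℝ, ((x * z : ℝ) : EReal) - (f z : EReal)) ∧
    (∀ z : ℝ, (f z : EReal) = ⨆ x : ℝ, ((x * z : ℝ) : EReal) - (y : EReal) * Uinv |x|) :=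
  perspective_conjugate_inverse_general U V Uinv y hy hU_mono hU_conc hU_diff hInadaInfty hU0 hV
    hinv hinv0 htop f hf
end

section
/- If a sequence of nonnegative measurable functions Zₙ converges to 0 almost surely and is uniformly bounded by a constant, and there exists Y with E[V(Y/(αK))] < ∞ for all α > 0, then I(αZₙ) := inf_{Y'∈Y} E[Zₙ V(Y'/(αZₙ))] → 0 for every α > 0 (hence Zₙ → 0 in the modular norm). -/
open Set Filter MeasureTheory
open scoped ENNReal Topology

/-!
On `{Zₙ > 0}` we have `Y/(αZₙ) ≥ Y/(αK)`, so monotonicity of `V` bounds the integrand by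
`Zₙ · W` with `W = max (V 0) (V (Y/(αK)))` (the value `V 0` only matters where `Y = 0`), and
`W` is integrable by hypothesis. Hence the integrands are dominated by `K · W` and tend to `0`
almost surely, and dominated convergence applies. Since neither `Y` nor `Zₙ` is assumed
measurable, dominated convergence is run on measurable minorants with the same lower integral.
-/

theorem tendsto_lintegral_zero_of_ae_le_of_ae_tendsto_zero {Ω : Type*} [MeasurableSpace Ω]
    {μ : Measure Ω} {F : ℕ → Ω → ℝ≥0∞} {G : Ω → ℝ≥0∞} (hG : ∫⁻ ω, G ω ∂μ ≠ ∞)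
    (hFG : ∀ n, ∀ᵐ ω ∂μ, F n ω ≤ G ω) (hF : ∀ᵐ ω ∂μ, Tendsto (fun n => F n ω) atTop (𝓝 0)) :
    Tendsto (fun n => ∫⁻ ω, F n ω ∂μ) atTop (𝓝 0) := by
  choose g hg_meas hg_le hg_eq using fun n => exists_measurable_le_lintegral_eq μ (F n)
  have hsup_fin : ∫⁻ ω, ⨆ n, g n ω ∂μ ≠ ∞ := by
    refine ne_top_of_le_ne_top hG (lintegral_mono_ae ?_)
    filter_upwards [ae_all_iff.2 hFG] with ω hω
    exact iSup_le fun n => (hg_le n ω).trans (hω n)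
  have hg_lim : ∀ᵐ ω ∂μ, Tendsto (fun n => g n ω) atTop (𝓝 0) := by
    filter_upwards [hF] with ω hω
    exact tendsto_of_tendsto_of_tendsto_of_le_of_le tendsto_const_nhds hω
      (fun _ => zero_le) (fun n => hg_le n ω)
  simp_rw [hg_eq]
  simpa using tendsto_lintegral_of_dominated_convergence _ hg_meas
    (fun n => ae_of_all _ fun ω => le_iSup (fun m => g m ω) n) hsup_fin hg_lim

theorem lintegral_ofReal_max_const_lt_top {Ω : Type*} [MeasurableSpace Ω] {μ : Measure Ω}
    [IsFiniteMeasure μ] {f : Ω → ℝ} (c : ℝ) (hf : ∫⁻ ω, ENNReal.ofReal (f ω) ∂μ < ∞) :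
    ∫⁻ ω, ENNReal.ofReal (max c (f ω)) ∂μ < ∞ :=
  calc ∫⁻ ω, ENNReal.ofReal (max c (f ω)) ∂μ
      ≤ ∫⁻ ω, (ENNReal.ofReal c + ENNReal.ofReal (f ω)) ∂μ := by
        refine lintegral_mono fun ω => ?_
        rw [ENNReal.ofReal_max]
        exact max_le le_self_add le_add_self
    _ = ENNReal.ofReal c * μ univ + ∫⁻ ω, ENNReal.ofReal (f ω) ∂μ := by
        rw [lintegral_add_left measurable_const, lintegral_const]
    _ < ∞ := ENNReal.add_lt_top.2 ⟨ENNReal.mul_lt_top ENNReal.ofReal_lt_top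
        (measure_lt_top _ _), hf⟩

theorem AntitoneOn.apply_div_le_max {V : ℝ → ℝ} (hV : AntitoneOn V (Ioi 0)) {y a b : ℝ}
    (hy : 0 ≤ y) (ha : 0 < a) (hab : a ≤ b) : V (y / a) ≤ max (V 0) (V (y / b)) := by
  rcases hy.eq_or_lt with rfl | hy
  · simp
  exact le_max_of_le_right <| hV (div_pos hy (ha.trans_le hab)) (div_pos hy ha)
    (div_le_div_of_nonneg_left hy.le ha hab)

theorem AntitoneOn.ofReal_perspective_le_mul {V : ℝ → ℝ} (hV : AntitoneOn V (Ioi 0)) {α K y z : ℝ}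
    (hα : 0 < α) (hy : 0 ≤ y) (hz : 0 ≤ z) (hzK : z ≤ K) :
    ENNReal.ofReal (if z = 0 then 0 else z * V (y / (α * z))) ≤
      ENNReal.ofReal z * ENNReal.ofReal (max (V 0) (V (y / (α * K)))) := by
  rcases hz.eq_or_lt with rfl | hz
  · simp
  rw [if_neg hz.ne', ← ENNReal.ofReal_mul hz.le]
  exact ENNReal.ofReal_le_ofReal <| mul_le_mul_of_nonneg_left
    (hV.apply_div_le_max hy (mul_pos hα hz) (mul_le_mul_of_nonneg_left hzK hα.le)) hz.le

theorem modular_convergence_of_bounded_ae_to_zero_general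
    {Ω : Type*} [MeasurableSpace Ω] (P : Measure Ω) [IsProbabilityMeasure P]
    (V : ℝ → ℝ)
    (hVanti : AntitoneOn V (Ioi 0))
    (𝒴 : Set (Ω → ℝ))
    (h𝒴nonneg : ∀ Y ∈ 𝒴, ∀ᵐ ω ∂P, 0 ≤ Y ω)
    (hY : ∃ Y ∈ 𝒴, ∀ β > (0:ℝ), ∫⁻ ω, ENNReal.ofReal (V (β * Y ω)) ∂P < ⊤)
    (Z : ℕ → Ω → ℝ)
    (hZnn : ∀ n, ∀ᵐ ω ∂P, 0 ≤ Z n ω)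
    (hZae : ∀ᵐ ω ∂P, Tendsto (fun n => Z n ω) atTop (nhds 0))
    (K : ℝ) (hK : 0 < K)
    (hZbd : ∀ n, ∀ᵐ ω ∂P, Z n ω ≤ K) :
    ∀ α > (0:ℝ),
      Tendsto (fun n => ⨅ Y ∈ 𝒴,
        ∫⁻ ω, ENNReal.ofReal
          (if Z n ω = 0 then 0 else Z n ω * V (Y ω / (α * Z n ω))) ∂P)
        atTop (nhds 0) := by
  intro α hα
  obtain ⟨Y, hY𝒴, hYint⟩ := hY
  set W : Ω → ℝ≥0∞ := fun ω => ENNReal.ofReal (max (V 0) (V (Y ω / (α * K))))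
  have hW : ∫⁻ ω, ENNReal.ofReal K * W ω ∂P ≠ ∞ := by
    rw [lintegral_const_mul' _ _ ENNReal.ofReal_ne_top]
    refine ENNReal.mul_ne_top ENNReal.ofReal_ne_top
      (lintegral_ofReal_max_const_lt_top _ ?_).ne
    simpa only [div_eq_inv_mul] using hYint _ (inv_pos.2 (mul_pos hα hK))
  have hZW : Tendsto (fun n => ∫⁻ ω, ENNReal.ofReal (Z n ω) * W ω ∂P) atTop (𝓝 0) := by
    refine tendsto_lintegral_zero_of_ae_le_of_ae_tendsto_zero hW (fun n => ?_) ?_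
    · filter_upwards [hZbd n] with ω hω
      gcongr
    · filter_upwards [hZae] with ω hω
      simpa using ENNReal.Tendsto.mul_const (ENNReal.tendsto_ofReal hω) (Or.inr ENNReal.ofReal_ne_top)
  refine tendsto_of_tendsto_of_tendsto_of_le_of_le tendsto_const_nhds hZW
    (fun _ => zero_le) (fun n => (iInf₂_le Y hY𝒴).trans (lintegral_mono_ae ?_))
  filter_upwards [h𝒴nonneg Y hY𝒴, hZnn n, hZbd n] with ω hYω hZω hZK
  exact hVanti.ofReal_perspective_le_mul hα hYω hZω hZK

/-- If nonnegative functions `Zₙ` converge to `0` a.s. and are uniformly bounded by `K`,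
and some `Y ∈ 𝒴` satisfies `E[V(βY)] < ∞` for all `β > 0`, then
`I(αZₙ) = inf_{Y'∈𝒴} E[Zₙ V(Y'/(αZₙ))] → 0` for every `α > 0`. -/
theorem modular_convergence_of_bounded_ae_to_zero
    {Ω : Type*} [MeasurableSpace Ω] (P : Measure Ω) [IsProbabilityMeasure P]
    (V : ℝ → ℝ)
    (hVconv : ConvexOn ℝ (Ioi 0) V)
    (hVanti : AntitoneOn V (Ioi 0))
    (hVpos : ∀ y > (0:ℝ), 0 < V y)
    (hmono : ∀ y > (0:ℝ), MonotoneOn (fun z => z * V (y / z)) (Ioi 0))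
    (𝒴 : Set (Ω → ℝ))
    (h𝒴nonneg : ∀ Y ∈ 𝒴, ∀ᵐ ω ∂P, 0 ≤ Y ω)
    (hY : ∃ Y ∈ 𝒴, ∀ β > (0:ℝ), ∫⁻ ω, ENNReal.ofReal (V (β * Y ω)) ∂P < ⊤)
    (Z : ℕ → Ω → ℝ)
    (hZnn : ∀ n, ∀ᵐ ω ∂P, 0 ≤ Z n ω)
    (hZae : ∀ᵐ ω ∂P, Tendsto (fun n => Z n ω) atTop (nhds 0))
    (K : ℝ) (hK : 0 < K)
    (hZbd : ∀ n, ∀ᵐ ω ∂P, Z n ω ≤ K) :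
    ∀ α > (0:ℝ),
      Tendsto (fun n => ⨅ Y ∈ 𝒴,
        ∫⁻ ω, ENNReal.ofReal
          (if Z n ω = 0 then 0 else Z n ω * V (Y ω / (α * Z n ω))) ∂P)
        atTop (nhds 0) :=
  modular_convergence_of_bounded_ae_to_zero_general P V hVanti 𝒴 h𝒴nonneg hY Z hZnn hZae K hK hZbd
end

section
/- If L is a Banach lattice of measurable functions on a probability space whose norm is order-continuous, and the norm dominates the functional Z ↦ sup_{Y∈Y} E[|Z| Y] in the sense that ‖1_A‖ → 0 implies sup_{Y∈Y} E[1_A Y] → 0 along disjoint sequences of sets Aₙ, then the family Y of nonnegative integrable random variables is uniformly integrable. -/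
/-!
The disjoint-sequence criterion yields uniform absolute continuity of `A ↦ ∫_A Y` over `Y ∈ 𝒴`,
and Markov's inequality `P(Y ≥ C) ≤ 1 / C` turns this into uniform integrability.

If uniform absolute continuity failed for some `ε`, there would be sets `s k` with
`P(s k) ≤ 2⁻ᵏ` and `Y k ∈ 𝒴` with `ε < ∫_{s k} Y k`. The tails `D m = ⋃_{j ≥ m} s j` decrease
to a null set, so absolute continuity of the single function `Y k` gives some `m > k` with
`ε < ∫_{D k \ D m} Y k`. Iterating `k ↦ m` produces disjoint sets `D kₙ \ D kₙ₊₁` on which some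
member of `𝒴` keeps mass `> ε`, contradicting the criterion.
-/

open Set Filter Function MeasureTheory Topology
open scoped ENNReal NNReal

theorem Antitone.pairwise_disjoint_on_diff_comp_succ {α : Type*} {D : ℕ → Set α}
    (hD : Antitone D) {φ : ℕ → ℕ} (hφ : StrictMono φ) :
    Pairwise (Disjoint on fun n => D (φ n) \ D (φ (n + 1))) :=
  (pairwise_disjoint_on _).2 fun _ _ hij =>
    disjoint_left.2 fun _ hi hj => hi.2 (hD (hφ.monotone hij) hj.1)

namespace MeasureTheory

variable {α : Type*} [MeasurableSpace α] {μ : Measure α}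

theorem tendsto_measure_biUnion_ge_zero {s : ℕ → Set α} (hs : ∑' j, μ (s j) ≠ ∞) :
    Tendsto (fun m => μ (⋃ j ≥ m, s j)) atTop (𝓝 0) :=
  tendsto_of_tendsto_of_tendsto_of_le_of_le tendsto_const_nhds (ENNReal.tendsto_sum_nat_add _ hs)
    (fun _ => zero_le) fun m => by
      rw [iUnion_ge_eq_iUnion_nat_add]
      exact measure_iUnion_le _

theorem eventually_lt_setLIntegral_diff {f : α → ℝ≥0∞} (hf : ∫⁻ x, f x ∂μ ≠ ∞)
    {D : ℕ → Set α} (hD : Tendsto (μ ∘ D) atTop (𝓝 0)) {t : Set α} {c : ℝ≥0∞}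
    (hc : c < ∫⁻ x in t, f x ∂μ) : ∀ᶠ m in atTop, c < ∫⁻ x in t \ D m, f x ∂μ := by
  have hgap : 0 < ∫⁻ x in t, f x ∂μ - c := tsub_pos_of_lt hc
  filter_upwards [(tendsto_setLIntegral_zero hf hD).eventually_lt_const hgap] with m hm
  by_contra! hle
  have hsplit : ∫⁻ x in t, f x ∂μ ≤ ∫⁻ x in t \ D m, f x ∂μ + ∫⁻ x in D m, f x ∂μ :=
    (lintegral_mono_set (sdiff_union_self.symm ▸ subset_union_left)).trans
      (lintegral_union_le _ _ _)
  refine (lt_irrefl (∫⁻ x in t, f x ∂μ)) ?_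
  calc ∫⁻ x in t, f x ∂μ
      ≤ c + ∫⁻ x in D m, f x ∂μ := hsplit.trans (by gcongr)
    _ < c + (∫⁻ x in t, f x ∂μ - c) := ENNReal.add_lt_add_left hc.ne_top hm
    _ = ∫⁻ x in t, f x ∂μ := add_tsub_cancel_of_le hc.le

theorem exists_pairwise_disjoint_lt_setLIntegral {f : ℕ → α → ℝ≥0∞}
    (hf : ∀ k, ∫⁻ x, f k x ∂μ ≠ ∞) {D : ℕ → Set α} (hDm : ∀ m, MeasurableSet (D m))
    (hDa : Antitone D) (hD : Tendsto (μ ∘ D) atTop (𝓝 0)) {c : ℝ≥0∞}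
    (hc : ∀ k, c < ∫⁻ x in D k, f k x ∂μ) :
    ∃ A : ℕ → Set α, (∀ n, MeasurableSet (A n)) ∧ Pairwise (Disjoint on A) ∧
      ∀ n, ∃ k, c < ∫⁻ x in A n, f k x ∂μ := by
  have hnext : ∀ k, ∃ m, k < m ∧ c < ∫⁻ x in D k \ D m, f k x ∂μ := fun k =>
    ((eventually_gt_atTop k).and (eventually_lt_setLIntegral_diff (hf k) hD (hc k))).exists
  choose next hlt hnext using hnext
  set φ : ℕ → ℕ := fun n => next^[n] 0
  have hφ_succ : ∀ n, φ (n + 1) = next (φ n) := fun n => iterate_succ_apply' next n 0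
  refine ⟨fun n => D (φ n) \ D (φ (n + 1)), fun n => (hDm _).diff (hDm _),
    hDa.pairwise_disjoint_on_diff_comp_succ (strictMono_nat_of_lt_succ fun n => ?_),
    fun n => ⟨φ n, ?_⟩⟩
  · exact hφ_succ n ▸ hlt (φ n)
  · simpa only [hφ_succ] using hnext (φ n)

theorem exists_pos_forall_setLIntegral_le_of_tendsto_iSup {ι : Type*} {f : ι → α → ℝ≥0∞}
    (hf : ∀ i, ∫⁻ x, f i x ∂μ ≠ ∞)
    (hcrit : ∀ A : ℕ → Set α, (∀ n, MeasurableSet (A n)) → Pairwise (Disjoint on A) →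
      Tendsto (fun n => ⨆ i, ∫⁻ x in A n, f i x ∂μ) atTop (𝓝 0))
    {ε : ℝ≥0∞} (hε : 0 < ε) :
    ∃ δ > 0, ∀ s, μ s ≤ δ → ∀ i, ∫⁻ x in s, f i x ∂μ ≤ ε := by
  by_contra! hbad
  choose s hs i hi using fun k : ℕ => hbad (2⁻¹ ^ k) (ENNReal.pow_pos (by norm_num) k)
  set D : ℕ → Set α := fun m => ⋃ j ≥ m, toMeasurable μ (s j)
  have hDa : Antitone D := fun m m' h => biUnion_subset_biUnion_left fun j hj => h.trans hj
  have hD : Tendsto (μ ∘ D) atTop (𝓝 0) := by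
    refine tendsto_measure_biUnion_ge_zero (ne_top_of_le_ne_top ?_ (ENNReal.tsum_le_tsum fun j =>
      (measure_toMeasurable (s j)).trans_le (hs j)))
    simp [ENNReal.tsum_geometric]
  obtain ⟨A, hAm, hAd, hA⟩ := exists_pairwise_disjoint_lt_setLIntegral (fun k => hf (i k))
    (fun m => .biUnion (to_countable _) fun j _ => measurableSet_toMeasurable μ (s j)) hDa hD
    fun k => (hi k).trans_le (lintegral_mono_set ((subset_toMeasurable μ (s k)).trans
      (subset_iUnion₂ (s := fun j (_ : j ≥ k) => toMeasurable μ (s j)) k le_rfl)))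
  obtain ⟨n, hn⟩ := ((hcrit A hAm hAd).eventually_lt_const hε).exists
  obtain ⟨k, hk⟩ := hA n
  exact (hk.trans_le (le_iSup (fun i => ∫⁻ x in A n, f i x ∂μ) (i k))).not_gt hn

theorem eventually_forall_setLIntegral_ge_le_of_tendsto_iSup {ι : Type*} {f : ι → α → ℝ≥0∞}
    (hf : ∀ i, AEMeasurable (f i) μ) {M : ℝ≥0∞} (hM : M ≠ ∞) (hfM : ∀ i, ∫⁻ x, f i x ∂μ ≤ M)
    (hcrit : ∀ A : ℕ → Set α, (∀ n, MeasurableSet (A n)) → Pairwise (Disjoint on A) →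
      Tendsto (fun n => ⨆ i, ∫⁻ x in A n, f i x ∂μ) atTop (𝓝 0))
    {ε : ℝ≥0∞} (hε : 0 < ε) :
    ∀ᶠ C : ℝ≥0 in atTop, ∀ i, ∫⁻ x in {x | (C : ℝ≥0∞) ≤ f i x}, f i x ∂μ ≤ ε := by
  obtain ⟨δ, hδ, hsmall⟩ := exists_pos_forall_setLIntegral_le_of_tendsto_iSup
    (fun i => ne_top_of_le_ne_top hM (hfM i)) hcrit hε
  have hdiv : Tendsto (fun C : ℝ≥0 => M / C) atTop (𝓝 0) := by
    simpa using ENNReal.Tendsto.const_div (ENNReal.tendsto_coe_nhds_top.2 tendsto_id) (Or.inr hM)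
  filter_upwards [hdiv.eventually_lt_const hδ, eventually_gt_atTop 0] with C hC hC0 i
  refine hsmall _ ?_ i
  calc μ {x | (C : ℝ≥0∞) ≤ f i x} ≤ (∫⁻ x, f i x ∂μ) / C :=
        meas_ge_le_lintegral_div (hf i) (ENNReal.coe_ne_zero.2 hC0.ne') ENNReal.coe_ne_top
    _ ≤ M / C := ENNReal.div_le_div_right (hfM i) _
    _ ≤ δ := hC.le

end MeasureTheory

theorem uniformly_integrable_of_order_continuous_general
    {Ω : Type*} [MeasurableSpace Ω] (P : Measure Ω)
    (𝒴 : Set (Ω → ℝ))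
    (hpos : ∀ Y ∈ 𝒴, ∀ᵐ ω ∂P, 0 ≤ Y ω)
    (hint : ∀ Y ∈ 𝒴, Integrable Y P)
    (hbdd : ∀ Y ∈ 𝒴, ∫ ω, Y ω ∂P ≤ 1)
    (N : (Ω → ℝ) → ℝ)
    (hOC : ∀ A : ℕ → Set Ω, (∀ n, MeasurableSet (A n)) → Pairwise (Function.onFun Disjoint A) →
      Tendsto (fun n => N (Set.indicator (A n) (fun _ => (1:ℝ)))) atTop (nhds 0))
    (hdom : ∀ A : ℕ → Set Ω, (∀ n, MeasurableSet (A n)) → Pairwise (Function.onFun Disjoint A) →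
      Tendsto (fun n => N (Set.indicator (A n) (fun _ => (1:ℝ)))) atTop (nhds 0) →
      Tendsto (fun n => ⨆ Y ∈ 𝒴, ∫⁻ ω in A n, ENNReal.ofReal (Y ω) ∂P) atTop (nhds 0)) :
    ∀ ε > (0:ℝ), ∃ C : ℝ, 0 < C ∧ ∀ Y ∈ 𝒴,
      ∫⁻ ω in {ω | C ≤ Y ω}, ENNReal.ofReal (Y ω) ∂P ≤ ENNReal.ofReal ε := by
  intro ε hε
  have hmass : ∀ Y : 𝒴, ∫⁻ ω, ENNReal.ofReal (Y.1 ω) ∂P ≤ 1 := fun ⟨Y, hY⟩ => by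
    rw [← ofReal_integral_eq_lintegral_ofReal (hint Y hY) (hpos Y hY)]
    exact ENNReal.ofReal_le_one.2 (hbdd Y hY)
  have hcrit : ∀ A : ℕ → Set Ω, (∀ n, MeasurableSet (A n)) → Pairwise (Disjoint on A) →
      Tendsto (fun n => ⨆ Y : 𝒴, ∫⁻ ω in A n, ENNReal.ofReal (Y.1 ω) ∂P) atTop (𝓝 0) :=
    fun A hA hAd => by simpa only [iSup_subtype'] using hdom A hA hAd (hOC A hA hAd)
  obtain ⟨C, hC, hC0⟩ := (eventually_forall_setLIntegral_ge_le_of_tendsto_iSup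
    (fun Y : 𝒴 => (hint Y.1 Y.2).aemeasurable.ennreal_ofReal) ENNReal.one_ne_top hmass hcrit
    (ENNReal.ofReal_pos.2 hε) |>.and (eventually_gt_atTop 0)).exists
  refine ⟨C, hC0, fun Y hY => ?_⟩
  have htail : {ω | (C : ℝ) ≤ Y ω} = {ω | (C : ℝ≥0∞) ≤ ENNReal.ofReal (Y ω)} := by
    ext ω
    have hC0' : ¬ (C : ℝ) ≤ 0 := not_le.2 (NNReal.coe_pos.2 hC0)
    simp [← ENNReal.ofReal_coe_nnreal, ENNReal.ofReal_le_ofReal_iff', hC0']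
  exact htail ▸ hC ⟨Y, hY⟩

/-- If the norm `N` of a Banach lattice of measurable functions is order-continuous
(so `N(1_{Aₙ}) → 0` along disjoint sequences of sets) and dominates the functional
`Z ↦ sup_{Y∈𝒴} E[1_A Y]` in the sense that `N(1_{Aₙ}) → 0` implies
`sup_{Y∈𝒴} E[1_{Aₙ} Y] → 0` along disjoint sequences, then the family `𝒴` of
nonnegative integrable random variables (with `sup E[Y] ≤ 1`) is uniformly integrable. -/
theorem uniformly_integrable_of_order_continuous
    {Ω : Type*} [MeasurableSpace Ω] (P : Measure Ω) [IsProbabilityMeasure P]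
    (𝒴 : Set (Ω → ℝ))
    (hpos : ∀ Y ∈ 𝒴, ∀ᵐ ω ∂P, 0 ≤ Y ω)
    (hint : ∀ Y ∈ 𝒴, Integrable Y P)
    (hbdd : ∀ Y ∈ 𝒴, ∫ ω, Y ω ∂P ≤ 1)
    (N : (Ω → ℝ) → ℝ)
    (hOC : ∀ A : ℕ → Set Ω, (∀ n, MeasurableSet (A n)) → Pairwise (Function.onFun Disjoint A) →
      Tendsto (fun n => N (Set.indicator (A n) (fun _ => (1:ℝ)))) atTop (nhds 0))
    (hdom : ∀ A : ℕ → Set Ω, (∀ n, MeasurableSet (A n)) → Pairwise (Function.onFun Disjoint A) →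
      Tendsto (fun n => N (Set.indicator (A n) (fun _ => (1:ℝ)))) atTop (nhds 0) →
      Tendsto (fun n => ⨆ Y ∈ 𝒴, ∫⁻ ω in A n, ENNReal.ofReal (Y ω) ∂P) atTop (nhds 0)) :
    ∀ ε > (0:ℝ), ∃ C : ℝ, 0 < C ∧ ∀ Y ∈ 𝒴,
      ∫⁻ ω in {ω | C ≤ Y ω}, ENNReal.ofReal (Y ω) ∂P ≤ ENNReal.ofReal ε :=
  uniformly_integrable_of_order_continuous_general P 𝒴 hpos hint hbdd N hOC hdom
end
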